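/- Let 𝒜 : ℝ^{n1×n2} → ℝ^m be a measurement operator satisfying the rank-(r+1) RIP with constant δ ∈ (0,1). Then for all unit vectors w ∈ ℝ^{n1}, v ∈ ℝ^{n2} and every Z ∈ ℝ^{n1×n2} with rank(Z) ≤ r, |⟨𝒜(wvᵀ), 𝒜(𝒫_{wvᵀ,⊥}(Z))⟩| ≤ δ‖Z‖_F. -/

import Mathlib

open Matrix MeasureTheory ProbabilityTheory
open scoped BigOperators

noncomputable section

/-- Frobenius inner product `⟨A, B⟩ = trace (Aᵀ * B)`. -/
def frobInner {n1 n2 : ℕ} (A B : Matrix (Fin n1) (Fin n2) ℝ) : ℝ :=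
  Matrix.trace (Aᵀ * B)

/-- Frobenius norm of a matrix. -/
def frobNorm {n1 n2 : ℕ} (A : Matrix (Fin n1) (Fin n2) ℝ) : ℝ :=
  Real.sqrt (∑ i, ∑ j, A i j ^ 2)

/-- Spectral (ℓ²-operator) norm of a matrix. -/
def specNorm {n1 n2 : ℕ} (A : Matrix (Fin n1) (Fin n2) ℝ) : ℝ :=
  ‖LinearMap.toContinuousLinearMap (Matrix.toEuclideanLin A)‖

/-- Euclidean norm of a vector in ℝ^m. -/
def vecNorm {m : ℕ} (v : Fin m → ℝ) : ℝ :=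
  Real.sqrt (∑ i, v i ^ 2)

/-- Smallest nonzero singular value of a matrix: the singular values of `X` are the
square roots of the eigenvalues of `Xᴴ * X`. -/
def sigmaMin {n1 n2 : ℕ} (X : Matrix (Fin n1) (Fin n2) ℝ) : ℝ :=
  sInf {s : ℝ | 0 < s ∧ ∃ i : Fin n2,
    s ^ 2 = (Matrix.isHermitian_conjTranspose_mul_self X).eigenvalues i}

/-- The measurement operator `𝒜(X) i = (1/√m) ⟨A i, X⟩`. -/
def measOp {n1 n2 m : ℕ} (A : Fin m → Matrix (Fin n1) (Fin n2) ℝ)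
    (X : Matrix (Fin n1) (Fin n2) ℝ) : Fin m → ℝ :=
  fun i => (Real.sqrt m)⁻¹ * frobInner (A i) X

/-- The adjoint `𝒜*(u) = (1/√m) ∑ i, u i • A i`. -/
def measAdj {n1 n2 m : ℕ} (A : Fin m → Matrix (Fin n1) (Fin n2) ℝ)
    (u : Fin m → ℝ) : Matrix (Fin n1) (Fin n2) ℝ :=
  (Real.sqrt m)⁻¹ • ∑ i, u i • A i

/-- The composite operator `𝒜*𝒜`. -/
def opAA {n1 n2 m : ℕ} (A : Fin m → Matrix (Fin n1) (Fin n2) ℝ)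
    (X : Matrix (Fin n1) (Fin n2) ℝ) : Matrix (Fin n1) (Fin n2) ℝ :=
  measAdj A (measOp A X)

/-- Rank-`k` restricted isometry property with constant `δ`. -/
def HasRIP {n1 n2 m : ℕ} (A : Fin m → Matrix (Fin n1) (Fin n2) ℝ) (k : ℕ) (δ : ℝ) : Prop :=
  ∀ Z : Matrix (Fin n1) (Fin n2) ℝ, Z.rank ≤ k →
    (1 - δ) * frobNorm Z ^ 2 ≤ vecNorm (measOp A Z) ^ 2 ∧
      vecNorm (measOp A Z) ^ 2 ≤ (1 + δ) * frobNorm Z ^ 2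

/-- Compact SVD: `X = V * S * Wᵀ`, `V, W` with orthonormal columns, `S` diagonal with
positive diagonal entries. -/
def IsCompactSVD {n1 n2 r : ℕ} (X : Matrix (Fin n1) (Fin n2) ℝ)
    (V : Matrix (Fin n1) (Fin r) ℝ) (S : Matrix (Fin r) (Fin r) ℝ)
    (W : Matrix (Fin n2) (Fin r) ℝ) : Prop :=
  X = V * S * Wᵀ ∧ Vᵀ * V = 1 ∧ Wᵀ * W = 1 ∧
    (∀ i j, i ≠ j → S i j = 0) ∧ (∀ i, 0 < S i i)

/-- `Vp` is a matrix whose columns form an orthonormal basis of the orthogonal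
complement of the column space of `V` (which has orthonormal columns). -/
def IsOrthComplement {n r : ℕ} (V : Matrix (Fin n) (Fin r) ℝ)
    (Vp : Matrix (Fin n) (Fin (n - r)) ℝ) : Prop :=
  Vpᵀ * Vp = 1 ∧ Vᵀ * Vp = 0

end
noncomputable section

/-- Projection onto the direction `w vᵀ` : `𝒫_{wvᵀ}(Z) = ⟨wvᵀ, Z⟩ wvᵀ`. -/
def projWV {n1 n2 : ℕ} (w : Fin n1 → ℝ) (v : Fin n2 → ℝ)
    (Z : Matrix (Fin n1) (Fin n2) ℝ) : Matrix (Fin n1) (Fin n2) ℝ :=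
  frobInner (Matrix.vecMulVec w v) Z • Matrix.vecMulVec w v

/-- `𝒫_{wvᵀ,⊥}(Z) = Z − ⟨wvᵀ, Z⟩ wvᵀ`. -/
def projWVperp {n1 n2 : ℕ} (w : Fin n1 → ℝ) (v : Fin n2 → ℝ)
    (Z : Matrix (Fin n1) (Fin n2) ℝ) : Matrix (Fin n1) (Fin n2) ℝ :=
  Z - projWV w v Z

/-- The virtual measurement operator `𝒜_{(w,v)} : ℝ^{n1×n2} → ℝ^{m+1}`. -/
def virtOp {n1 n2 m : ℕ} (A : Fin m → Matrix (Fin n1) (Fin n2) ℝ)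
    (w : Fin n1 → ℝ) (v : Fin n2 → ℝ) (Z : Matrix (Fin n1) (Fin n2) ℝ) :
    Fin (m + 1) → ℝ :=
  fun i => if h : (i : ℕ) < m then
      (Real.sqrt m)⁻¹ * frobInner (projWVperp w v (A ⟨(i : ℕ), h⟩)) Z
    else frobInner (Matrix.vecMulVec w v) Z

/-- Adjoint of the virtual measurement operator. -/
def virtAdj {n1 n2 m : ℕ} (A : Fin m → Matrix (Fin n1) (Fin n2) ℝ)
    (w : Fin n1 → ℝ) (v : Fin n2 → ℝ) (u : Fin (m + 1) → ℝ) :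
    Matrix (Fin n1) (Fin n2) ℝ :=
  (Real.sqrt m)⁻¹ • (∑ i : Fin m, u i.castSucc • projWVperp w v (A i))
    + u (Fin.last m) • Matrix.vecMulVec w v

/-- The composite operator `𝒜*_{(w,v)} 𝒜_{(w,v)}`. -/
def virtAA {n1 n2 m : ℕ} (A : Fin m → Matrix (Fin n1) (Fin n2) ℝ)
    (w : Fin n1 → ℝ) (v : Fin n2 → ℝ) (Z : Matrix (Fin n1) (Fin n2) ℝ) :
    Matrix (Fin n1) (Fin n2) ℝ :=
  virtAdj A w v (virtOp A w v Z)

end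

/-! `U = wvᵀ` has unit Frobenius norm, so `Y = 𝒫_{wvᵀ,⊥}(Z)` is orthogonal to `U`, satisfies
`‖Y‖_F ≤ ‖Z‖_F`, and every combination `sU + tY = tZ + (s - t⟨U, Z⟩)U` has rank at most `r + 1`.
For orthonormal `X, Y` the polarization identity
`4⟨𝒜X, 𝒜Y⟩ = ‖𝒜(X + Y)‖² - ‖𝒜(X - Y)‖²`, together with `‖X ± Y‖_F² = 2` and the RIP bounds,
gives `|⟨𝒜X, 𝒜Y⟩| ≤ δ`; rescaling gives `δ ‖X‖_F ‖Y‖_F` for any orthogonal pair. -/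

namespace Matrix

variable {m n R : Type*} [Fintype n] [Field R]

theorem rank_add_le (A B : Matrix m n R) : (A + B).rank ≤ A.rank + B.rank := by
  rw [rank, rank, rank, mulVecLin_add]
  exact (Submodule.finrank_mono (LinearMap.range_add_le _ _)).trans
    (Submodule.finrank_add_le_finrank_add_finrank _ _)

theorem rank_smul_le (c : R) (A : Matrix m n R) : (c • A).rank ≤ A.rank := by
  rcases eq_or_ne c 0 with rfl | hc
  · simp
  · rw [rank_smul_of_mem_nonZeroDivisors A (mem_nonZeroDivisors_of_ne_zero hc)]

end Matrix

section Frobenius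

variable {n1 n2 : ℕ}

lemma frobInner_eq_sum (A B : Matrix (Fin n1) (Fin n2) ℝ) :
    frobInner A B = ∑ i, ∑ j, A i j * B i j := by
  simp only [frobInner, Matrix.trace, Matrix.diag, Matrix.mul_apply, Matrix.transpose_apply]
  exact Finset.sum_comm

lemma frobInner_comm (A B : Matrix (Fin n1) (Fin n2) ℝ) : frobInner A B = frobInner B A := by
  simp only [frobInner_eq_sum, mul_comm]

@[simp] lemma frobInner_add_left (A B C : Matrix (Fin n1) (Fin n2) ℝ) :
    frobInner (A + B) C = frobInner A C + frobInner B C := by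
  simp [frobInner, Matrix.add_mul]

@[simp] lemma frobInner_add_right (A B C : Matrix (Fin n1) (Fin n2) ℝ) :
    frobInner A (B + C) = frobInner A B + frobInner A C := by
  simp [frobInner, Matrix.mul_add]

@[simp] lemma frobInner_sub_left (A B C : Matrix (Fin n1) (Fin n2) ℝ) :
    frobInner (A - B) C = frobInner A C - frobInner B C := by
  simp [frobInner, Matrix.sub_mul]

@[simp] lemma frobInner_sub_right (A B C : Matrix (Fin n1) (Fin n2) ℝ) :
    frobInner A (B - C) = frobInner A B - frobInner A C := by
  simp [frobInner, Matrix.mul_sub]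

@[simp] lemma frobInner_smul_left (c : ℝ) (A B : Matrix (Fin n1) (Fin n2) ℝ) :
    frobInner (c • A) B = c * frobInner A B := by
  simp [frobInner]

@[simp] lemma frobInner_smul_right (c : ℝ) (A B : Matrix (Fin n1) (Fin n2) ℝ) :
    frobInner A (c • B) = c * frobInner A B := by
  simp [frobInner]

lemma frobNorm_nonneg (A : Matrix (Fin n1) (Fin n2) ℝ) : 0 ≤ frobNorm A :=
  Real.sqrt_nonneg _

lemma frobNorm_sq (A : Matrix (Fin n1) (Fin n2) ℝ) : frobNorm A ^ 2 = frobInner A A := by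
  rw [frobNorm, Real.sq_sqrt (by positivity), frobInner_eq_sum]
  simp only [sq]

lemma frobNorm_eq_zero_iff {A : Matrix (Fin n1) (Fin n2) ℝ} : frobNorm A = 0 ↔ A = 0 := by
  rw [frobNorm, Real.sqrt_eq_zero (by positivity)]
  simp only [Finset.mem_univ, true_imp_iff, sq_eq_zero_iff,
    Finset.sum_eq_zero_iff_of_nonneg fun i _ => Finset.sum_nonneg fun j _ => sq_nonneg (A i j),
    Finset.sum_eq_zero_iff_of_nonneg fun _ _ => sq_nonneg _]
  exact ⟨fun h => ext h, fun h i j => by simp [h]⟩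

lemma frobNorm_smul (c : ℝ) (A : Matrix (Fin n1) (Fin n2) ℝ) :
    frobNorm (c • A) = |c| * frobNorm A := by
  simp [frobNorm, mul_pow, ← Finset.mul_sum, Real.sqrt_mul (sq_nonneg c), Real.sqrt_sq_eq_abs]

lemma vecNorm_sq {m : ℕ} (u : Fin m → ℝ) : vecNorm u ^ 2 = u ⬝ᵥ u := by
  rw [vecNorm, Real.sq_sqrt (by positivity)]
  simp only [dotProduct, sq]

lemma frobNorm_vecMulVec (w : Fin n1 → ℝ) (v : Fin n2 → ℝ) :
    frobNorm (vecMulVec w v) = vecNorm w * vecNorm v := by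
  simp only [frobNorm, vecNorm, vecMulVec_apply, mul_pow, ← Finset.mul_sum, ← Finset.sum_mul]
  exact Real.sqrt_mul (by positivity) _

end Frobenius

section Projection

variable {n1 n2 : ℕ} {U : Matrix (Fin n1) (Fin n2) ℝ}

lemma frobInner_sub_frobInner_smul_self (hU : frobNorm U = 1) (Z : Matrix (Fin n1) (Fin n2) ℝ) :
    frobInner U (Z - frobInner U Z • U) = 0 := by
  simp [← frobNorm_sq, hU]

lemma frobNorm_sub_frobInner_smul_le (hU : frobNorm U = 1) (Z : Matrix (Fin n1) (Fin n2) ℝ) :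
    frobNorm (Z - frobInner U Z • U) ≤ frobNorm Z := by
  have hsq : frobNorm (Z - frobInner U Z • U) ^ 2 = frobNorm Z ^ 2 - frobInner U Z ^ 2 := by
    simp only [frobNorm_sq, frobInner_sub_left, frobInner_sub_right, frobInner_smul_left,
      frobInner_smul_right, frobInner_comm Z U, ← frobNorm_sq U, hU]
    ring
  refine (pow_le_pow_iff_left₀ (frobNorm_nonneg _) (frobNorm_nonneg _) two_ne_zero).mp ?_
  linarith [sq_nonneg (frobInner U Z)]

lemma projWVperp_eq (w : Fin n1 → ℝ) (v : Fin n2 → ℝ) (Z : Matrix (Fin n1) (Fin n2) ℝ) :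
    projWVperp w v Z = Z - frobInner (vecMulVec w v) Z • vecMulVec w v :=
  rfl

end Projection

section RIP

variable {n1 n2 m k : ℕ} {A : Fin m → Matrix (Fin n1) (Fin n2) ℝ} {δ : ℝ}

@[simp] lemma measOp_zero : measOp A 0 = 0 := by
  ext i; simp [measOp, frobInner]

lemma measOp_add (B C : Matrix (Fin n1) (Fin n2) ℝ) :
    measOp A (B + C) = measOp A B + measOp A C := by
  ext i; simp [measOp, mul_add]

lemma measOp_sub (B C : Matrix (Fin n1) (Fin n2) ℝ) :
    measOp A (B - C) = measOp A B - measOp A C := by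
  ext i; simp [measOp, mul_sub]

lemma measOp_smul (c : ℝ) (B : Matrix (Fin n1) (Fin n2) ℝ) :
    measOp A (c • B) = c • measOp A B := by
  ext i; simp [measOp, mul_left_comm]

lemma four_mul_dotProduct_eq {ι : Type*} [Fintype ι] (a b : ι → ℝ) :
    4 * (a ⬝ᵥ b) = (a + b) ⬝ᵥ (a + b) - (a - b) ⬝ᵥ (a - b) := by
  simp only [add_dotProduct, dotProduct_add, sub_dotProduct, dotProduct_sub, dotProduct_comm b a]
  ring

theorem HasRIP.abs_dotProduct_le_of_orthonormal (hRIP : HasRIP A k δ)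
    {X Y : Matrix (Fin n1) (Fin n2) ℝ} (hX : frobNorm X = 1) (hY : frobNorm Y = 1)
    (hXY : frobInner X Y = 0) (hadd : (X + Y).rank ≤ k) (hsub : (X - Y).rank ≤ k) :
    |measOp A X ⬝ᵥ measOp A Y| ≤ δ := by
  have hYX : frobInner Y X = 0 := by rw [frobInner_comm, hXY]
  have hadd_norm : frobNorm (X + Y) ^ 2 = 2 := by
    norm_num [frobNorm_sq, ← frobNorm_sq X, ← frobNorm_sq Y, hX, hY, hXY, hYX]
  have hsub_norm : frobNorm (X - Y) ^ 2 = 2 := by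
    norm_num [frobNorm_sq, ← frobNorm_sq X, ← frobNorm_sq Y, hX, hY, hXY, hYX]
  obtain ⟨hadd_lower, hadd_upper⟩ := hRIP _ hadd
  obtain ⟨hsub_lower, hsub_upper⟩ := hRIP _ hsub
  rw [hadd_norm, vecNorm_sq, measOp_add] at hadd_lower hadd_upper
  rw [hsub_norm, vecNorm_sq, measOp_sub] at hsub_lower hsub_upper
  have := four_mul_dotProduct_eq (measOp A X) (measOp A Y)
  rw [abs_le]
  constructor <;> linarith

theorem HasRIP.abs_dotProduct_le_of_orthogonal (hRIP : HasRIP A k δ)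
    {X Y : Matrix (Fin n1) (Fin n2) ℝ} (hXY : frobInner X Y = 0)
    (hspan : ∀ s t : ℝ, (s • X + t • Y).rank ≤ k) :
    |measOp A X ⬝ᵥ measOp A Y| ≤ δ * frobNorm X * frobNorm Y := by
  rcases (frobNorm_nonneg X).eq_or_lt with hX | hX
  · rw [← hX]; simp [frobNorm_eq_zero_iff.mp hX.symm]
  rcases (frobNorm_nonneg Y).eq_or_lt with hY | hY
  · rw [← hY]; simp [frobNorm_eq_zero_iff.mp hY.symm]
  have hunit := hRIP.abs_dotProduct_le_of_orthonormal
    (X := (frobNorm X)⁻¹ • X) (Y := (frobNorm Y)⁻¹ • Y)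
    (by rw [frobNorm_smul, abs_inv, abs_of_pos hX, inv_mul_cancel₀ hX.ne'])
    (by rw [frobNorm_smul, abs_inv, abs_of_pos hY, inv_mul_cancel₀ hY.ne'])
    (by simp [hXY]) (hspan _ _) (by simpa [sub_eq_add_neg] using hspan _ (-(frobNorm Y)⁻¹))
  rw [measOp_smul, measOp_smul, smul_dotProduct, dotProduct_smul, smul_eq_mul, smul_eq_mul,
    abs_mul, abs_mul, abs_inv, abs_inv, abs_of_pos hX, abs_of_pos hY,
    inv_mul_le_iff₀ hX, inv_mul_le_iff₀ hY] at hunit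
  linarith

end RIP

theorem statement12_general {n1 n2 m r : ℕ}
    (A : Fin m → Matrix (Fin n1) (Fin n2) ℝ) (δ : ℝ)
    (hδ0 : 0 < δ) (hRIP : HasRIP A (r + 1) δ)
    (w : Fin n1 → ℝ) (v : Fin n2 → ℝ) (hw : vecNorm w = 1) (hv : vecNorm v = 1)
    (Z : Matrix (Fin n1) (Fin n2) ℝ) (hZ : Z.rank ≤ r) :
    |∑ i, measOp A (Matrix.vecMulVec w v) i * measOp A (projWVperp w v Z) i| ≤
      δ * frobNorm Z := by
  set U := vecMulVec w v
  have hU : frobNorm U = 1 := by rw [frobNorm_vecMulVec, hw, hv, one_mul]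
  have hspan (s t : ℝ) : (s • U + t • projWVperp w v Z).rank ≤ r + 1 := by
    rw [projWVperp_eq, show s • U + t • (Z - frobInner U Z • U) =
      t • Z + (s - t * frobInner U Z) • U by module]
    exact (rank_add_le _ _).trans (add_le_add ((rank_smul_le _ _).trans hZ)
      ((rank_smul_le _ _).trans (rank_vecMulVec_le w v)))
  calc |measOp A U ⬝ᵥ measOp A (projWVperp w v Z)|
      ≤ δ * frobNorm U * frobNorm (projWVperp w v Z) :=
        hRIP.abs_dotProduct_le_of_orthogonal (frobInner_sub_frobInner_smul_self hU Z) hspan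
    _ ≤ δ * frobNorm Z := by
        rw [hU, mul_one]
        exact mul_le_mul_of_nonneg_left (frobNorm_sub_frobInner_smul_le hU Z) hδ0.le

/-- Under a rank-`(r+1)` RIP with constant `δ`, for unit vectors
`w, v` and any `Z` of rank at most `r`,
`|⟨𝒜(wvᵀ), 𝒜(𝒫_{wvᵀ,⊥}(Z))⟩| ≤ δ ‖Z‖_F`. -/
theorem statement12 {n1 n2 m r : ℕ}
    (A : Fin m → Matrix (Fin n1) (Fin n2) ℝ) (δ : ℝ)
    (hδ0 : 0 < δ) (hδ1 : δ < 1) (hRIP : HasRIP A (r + 1) δ)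
    (w : Fin n1 → ℝ) (v : Fin n2 → ℝ) (hw : vecNorm w = 1) (hv : vecNorm v = 1)
    (Z : Matrix (Fin n1) (Fin n2) ℝ) (hZ : Z.rank ≤ r) :
    |∑ i, measOp A (Matrix.vecMulVec w v) i * measOp A (projWVperp w v Z) i| ≤
      δ * frobNorm Z :=
  statement12_general A δ hδ0 hRIP w v hw hv Z hZ
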